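/- Let R : ℝᵐ → S⁺ₙ(ℝ) be a C^k (respectively smooth) map into the symmetric positive definite matrices. Then the pointwise positive definite square root S(x) = R(x)^{1/2} defines a C^k (respectively smooth) map S : ℝᵐ → S⁺ₙ(ℝ). -/

import Mathlib

/-!
The squaring map `M ↦ M * M` has derivative `H ↦ A * H + H * A` at `A`. When `A` is positive
definite this operator is injective: pairing `A * H + H * A = 0` with `Hᴴ` under the trace gives
`tr (Hᴴ * A * H) + tr (H * A * Hᴴ) = 0`, a sum of two nonnegative terms. So by the inverse function
theorem squaring has a smooth local inverse near the square root `S x₀`. The positive square root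
is continuous (continuous functional calculus), hence near `x₀` it stays in the domain of that
local inverse and coincides with it composed with `R`.
-/

open Topology
open scoped Matrix.Norms.L2Operator MatrixOrder ComplexOrder ContDiff

theorem ContDiffAt.of_comp_of_hasFDerivAt {𝕜 X E F : Type*} [RCLike 𝕜]
    [NormedAddCommGroup X] [NormedSpace 𝕜 X] [NormedAddCommGroup E] [NormedSpace 𝕜 E]
    [CompleteSpace E] [NormedAddCommGroup F] [NormedSpace 𝕜 F] [CompleteSpace F]
    {f : E → F} {f' : E ≃L[𝕜] F} {S : X → E} {x₀ : X} {n m : WithTop ℕ∞}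
    (hf : ContDiffAt 𝕜 n f (S x₀)) (hf' : HasFDerivAt f (f' : E →L[𝕜] F) (S x₀)) (hn : n ≠ 0)
    (hmn : m ≤ n) (hS : ContinuousAt S x₀) (hfS : ContDiffAt 𝕜 m (f ∘ S) x₀) :
    ContDiffAt 𝕜 m S x₀ := by
  have hinv : ∀ᶠ x in 𝓝 x₀, hf.localInverse hf' hn (f (S x)) = S x :=
    hS.eventually (hf.hasStrictFDerivAt' hf' hn).eventually_left_inverse
  exact (((hf.to_localInverse hf' hn).of_le hmn).comp x₀ hfS).congr_of_eventuallyEq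
    (hinv.mono fun _ h => h.symm)

namespace Matrix

variable {m n 𝕜 : Type*} [Fintype m] [Fintype n] [RCLike 𝕜]

theorem PosDef.eq_zero_of_mul_add_mul_eq_zero {A H : Matrix n n 𝕜} (hA : A.PosDef)
    (h : A * H + H * A = 0) : H = 0 := by
  classical
  have hsum : (Hᴴ * A * H).trace + (H * A * Hᴴ).trace = 0 := by
    rw [mul_assoc, trace_mul_comm (H * A), ← trace_add, ← mul_add, h, mul_zero, trace_zero]
  have hleft := hA.posSemidef.conjTranspose_mul_mul_same H
  have hright := hA.posSemidef.mul_mul_conjTranspose_same H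
  have hzero : Hᴴ * A * H = 0 := hleft.trace_eq_zero_iff.mp
    ((add_eq_zero_iff_of_nonneg hleft.trace_nonneg hright.trace_nonneg).mp hsum).1
  obtain ⟨B, rfl⟩ := CStarAlgebra.nonneg_iff_eq_star_mul_self.mp hA.posSemidef.nonneg
  have hBH : B * H = 0 := by
    rw [← conjTranspose_mul_self_eq_zero, conjTranspose_mul]
    simpa only [mul_assoc, star_eq_conjTranspose] using hzero
  exact hA.isUnit.mul_right_eq_zero.mp (by rw [mul_assoc, hBH, mul_zero])

variable [DecidableEq n]

noncomputable def PosDef.sylvesterEquiv {A : Matrix n n 𝕜} (hA : A.PosDef) :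
    Matrix n n 𝕜 ≃L[𝕜] Matrix n n 𝕜 :=
  (LinearEquiv.ofInjectiveEndo (LinearMap.mulLeft 𝕜 A + LinearMap.mulRight 𝕜 A)
    ((injective_iff_map_eq_zero _).mpr fun _ => hA.eq_zero_of_mul_add_mul_eq_zero)
    ).toContinuousLinearEquiv

theorem PosDef.sylvesterEquiv_apply {A : Matrix n n 𝕜} (hA : A.PosDef) (H : Matrix n n 𝕜) :
    hA.sylvesterEquiv H = A * H + H * A :=
  rfl

theorem PosDef.hasFDerivAt_mul_self {A : Matrix n n 𝕜} (hA : A.PosDef) :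
    HasFDerivAt (fun M : Matrix n n 𝕜 => M * M)
      (hA.sylvesterEquiv : Matrix n n 𝕜 →L[𝕜] Matrix n n 𝕜) A := by
  refine ((hasFDerivAt_id (𝕜 := 𝕜) A).mul' (hasFDerivAt_id A)).congr_fderiv ?_
  ext1 H
  simp [hA.sylvesterEquiv_apply]

variable {X : Type*} [NormedAddCommGroup X] [NormedSpace 𝕜 X]

theorem contDiff_iff {f : X → Matrix m n 𝕜} {k : WithTop ℕ∞} :
    ContDiff 𝕜 k f ↔ ∀ i j, ContDiff 𝕜 k fun x => f x i j := by
  rw [← (ofLinearEquiv 𝕜).symm.toContinuousLinearEquiv.comp_contDiff_iff, contDiff_pi]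
  simp only [contDiff_pi]
  rfl

theorem contDiffAt_of_mul_self_eq {R S : X → Matrix n n 𝕜} {x₀ : X} {k : WithTop ℕ∞}
    (hSR : ∀ x, S x * S x = R x) (hS : ContinuousAt S x₀) (hS₀ : (S x₀).PosDef)
    (hR : ContDiffAt 𝕜 k R x₀) : ContDiffAt 𝕜 k S x₀ :=
  (contDiff_id.mul contDiff_id).contDiffAt.of_comp_of_hasFDerivAt hS₀.hasFDerivAt_mul_self
    (n := ω) (by simp) le_top hS (by rwa [show (fun M => id M * id M) ∘ S = R from funext hSR])

end Matrix

theorem posdef_sqrt_contDiff_general {m n : ℕ} (k : ℕ∞)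
    (R sqrtR : (Fin m → ℝ) → Matrix (Fin n) (Fin n) ℝ)
    (hRpd : ∀ x, (R x).PosDef)
    (hR : ∀ i j, ContDiff ℝ k fun x => R x i j)
    (hsq_pd : ∀ x, (sqrtR x).PosDef)
    (hsq : ∀ x, sqrtR x * sqrtR x = R x) :
    ∀ i j, ContDiff ℝ k fun x => sqrtR x i j := by
  have hRc : ContDiff ℝ k R := Matrix.contDiff_iff.mpr hR
  have hsqrt : sqrtR = fun x => CFC.sqrt (R x) :=
    funext fun x => (CFC.sqrt_unique (hsq x) (hsq_pd x).posSemidef.nonneg).symm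
  have hcont : Continuous sqrtR := hsqrt ▸ CFC.continuousOn_sqrt.comp_continuous hRc.continuous
    fun x => (hRpd x).posSemidef.nonneg
  exact Matrix.contDiff_iff.mp <| contDiff_iff_contDiffAt.mpr fun x =>
    Matrix.contDiffAt_of_mul_self_eq hsq hcont.continuousAt (hsq_pd x) hRc.contDiffAt

/-- If `R : ℝᵐ → S⁺ₙ(ℝ)` is `C^k` (with `k = ∞` allowed, covering the smooth
case) and `sqrtR x` denotes the pointwise symmetric positive definite square
root of `R x`, then `sqrtR` is `C^k` as well. -/
theorem posdef_sqrt_contDiff {m n : ℕ} (k : ℕ∞)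
    (R sqrtR : (Fin m → ℝ) → Matrix (Fin n) (Fin n) ℝ)
    (hRs : ∀ x, (R x).IsSymm) (hRpd : ∀ x, (R x).PosDef)
    (hR : ∀ i j, ContDiff ℝ k fun x => R x i j)
    (hsq_symm : ∀ x, (sqrtR x).IsSymm)
    (hsq_pd : ∀ x, (sqrtR x).PosDef)
    (hsq : ∀ x, sqrtR x * sqrtR x = R x) :
    ∀ i j, ContDiff ℝ k fun x => sqrtR x i j :=
  posdef_sqrt_contDiff_general k R sqrtR hRpd hR hsq_pd hsq
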